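/- arXiv:2203.14305 — 3 statements merged into one kernel-verified Lean document; each statement's English description precedes it below -/
import Mathlib

section
/- Let F_c be a nondecreasing CDF and α > 0. Define the trace TR_α(x) as the maximal z ∈ [0, x) with F_c(x) + α(z − x) = F_c(z), or 0 if none exists. Then for any two scores x₁ < x₂ with traces z₁ = TR_α(x₁), z₂ = TR_α(x₂), the α-segments [z₁, x₁) and [z₂, x₂) are either disjoint or one contains the other. -/
/-- `z` is the trace of `x` for gradient `β` on the CDF `F`: the maximal
`z ∈ [0, x)` where the chord line of `x` meets `F` (or `0` if none), the chord
line lying on or above `F` in between. -/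
def IsTrace (F : ℝ → ℝ) (β x z : ℝ) : Prop :=
  0 ≤ z ∧ z < x ∧ (F x + β * (z - x) = F z ∨ z = 0) ∧
    (∀ w, z < w → w < x → F x + β * (w - x) ≠ F w) ∧
    (∀ w, z < w → w < x → F w ≤ F x + β * (w - x))

/-- Two α-segments `[z₁, x₁)` and `[z₂, x₂)` are either disjoint or nested. -/
theorem alpha_segments_disjoint_or_nested (F : ℝ → ℝ) (hF : Monotone F)
    (α : ℝ) (hα : 0 < α) (x₁ x₂ z₁ z₂ : ℝ) (hx : x₁ < x₂)
    (h₁ : IsTrace F α x₁ z₁) (h₂ : IsTrace F α x₂ z₂) :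
    Disjoint (Set.Ico z₁ x₁) (Set.Ico z₂ x₂) ∨
      Set.Ico z₁ x₁ ⊆ Set.Ico z₂ x₂ ∨ Set.Ico z₂ x₂ ⊆ Set.Ico z₁ x₁ := by
  obtain ⟨hz₁0, hz₁x, heq₁, hne₁, hle₁⟩ := h₁
  obtain ⟨hz₂0, hz₂x, heq₂, hne₂, hle₂⟩ := h₂
  by_cases hc : x₁ ≤ z₂
  · left
    rw [Set.disjoint_left]
    rintro a ⟨_, ha₁⟩ ⟨ha₂, _⟩
    exact absurd (lt_of_lt_of_le ha₁ hc) (not_lt.mpr ha₂)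
  · push_neg at hc
    -- z₂ < x₁. Show z₂ ≤ z₁.
    have hz₂z₁ : z₂ ≤ z₁ := by
      by_contra hlt
      push_neg at hlt
      -- z₁ < z₂ < x₁
      have hz₂pos : z₂ ≠ 0 := by
        intro h0
        exact absurd (h0 ▸ hlt) (not_lt.mpr hz₁0)
      have heq : F x₂ + α * (z₂ - x₂) = F z₂ := heq₂.resolve_right hz₂pos
      have h1 : F z₂ < F x₁ + α * (z₂ - x₁) :=
        lt_of_le_of_ne (hle₁ z₂ hlt hc) (fun h => hne₁ z₂ hlt hc h.symm)
      have h2 : F x₁ ≤ F x₂ + α * (x₁ - x₂) := hle₂ x₁ hc hx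
      nlinarith
    right; left
    exact Set.Ico_subset_Ico hz₂z₁ (le_of_lt hx)
end

section
/- Water-filling is budget-optimal against a decreasing density: let f_c be a strictly decreasing positive density on (0,∞) with CDF F_c, and let scores r₁ ≤ … ≤ r_n with budget n·p. Among all reinforcements R_i ≥ r_i with ∑(R_i − r_i) ≤ n·p, the sum ∑_i F_c(R_i) is maximized by choosing m and level h with R_i = max(r_i, h) where ∑_{r_i < h}(h − r_i) = n·p (raising the lowest scores to a common level h). -/
/-!
Put `W i = max (r i) h`. Above `W i ≥ h` the density is at most `f h`, and below `W i` (which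
then equals `h`) it is at least `f h`; either way `F (R i) - F (W i) ≤ f h * (R i - W i)`.
Summed over `i`, the right-hand side is `f h` times the spent budget minus `n * p`, so `≤ 0`.
-/

open MeasureTheory Set

section AntitoneDensity

variable {f F : ℝ → ℝ}

lemma MeasureTheory.IntegrableOn.intervalIntegrable_of_nonneg (hint : IntegrableOn f (Ioi 0))
    {a b : ℝ} (ha : 0 ≤ a) (hb : 0 ≤ b) : IntervalIntegrable f volume a b :=
  ⟨hint.mono_set fun _ ht => ha.trans_lt ht.1, hint.mono_set fun _ ht => hb.trans_lt ht.1⟩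

lemma sub_eq_intervalIntegral_of_cdf (hint : IntegrableOn f (Ioi 0))
    (hF : ∀ x, F x = ∫ t in Ioc (0:ℝ) x, f t) {a b : ℝ} (ha : 0 ≤ a) (hb : 0 ≤ b) :
    F b - F a = ∫ t in a..b, f t := by
  rw [hF, hF, ← intervalIntegral.integral_of_le ha, ← intervalIntegral.integral_of_le hb]
  exact intervalIntegral.integral_interval_sub_left
    (hint.intervalIntegrable_of_nonneg le_rfl hb) (hint.intervalIntegrable_of_nonneg le_rfl ha)

variable (hanti : AntitoneOn f (Ioi 0)) (hint : IntegrableOn f (Ioi 0))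
  (hF : ∀ x, F x = ∫ t in Ioc (0:ℝ) x, f t)
include hanti hint hF

lemma sub_le_mul_of_antitoneOn {c x y : ℝ} (hc : 0 < c) (hcx : c ≤ x) (hxy : x ≤ y) :
    F y - F x ≤ f c * (y - x) := by
  have hx : 0 < x := hc.trans_le hcx
  calc F y - F x = ∫ t in x..y, f t :=
        sub_eq_intervalIntegral_of_cdf hint hF hx.le (hx.le.trans hxy)
    _ ≤ ∫ _ in x..y, f c :=
        intervalIntegral.integral_mono_on hxy
          (hint.intervalIntegrable_of_nonneg hx.le (hx.le.trans hxy)) intervalIntegrable_const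
          fun t ht => hanti hc (hx.trans_le ht.1) (hcx.trans ht.1)
    _ = f c * (y - x) := by rw [intervalIntegral.integral_const, smul_eq_mul, mul_comm]

lemma mul_le_sub_of_antitoneOn {c x y : ℝ} (hy : 0 < y) (hyx : y ≤ x) (hxc : x ≤ c) :
    f c * (x - y) ≤ F x - F y := by
  calc f c * (x - y) = ∫ _ in y..x, f c := by
        rw [intervalIntegral.integral_const, smul_eq_mul, mul_comm]
    _ ≤ ∫ t in y..x, f t :=
        intervalIntegral.integral_mono_on hyx intervalIntegrable_const
          (hint.intervalIntegrable_of_nonneg hy.le (hy.le.trans hyx))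
          fun t ht => hanti (hy.trans_le ht.1) (hy.trans_le (hyx.trans hxc)) (ht.2.trans hxc)
    _ = F x - F y := (sub_eq_intervalIntegral_of_cdf hint hF hy.le (hy.le.trans hyx)).symm

lemma sub_max_le_mul_of_antitoneOn {r h R : ℝ} (hr : 0 < r) (hh : 0 < h) (hrR : r ≤ R) :
    F R - F (max r h) ≤ f h * (R - max r h) := by
  rcases le_or_gt (max r h) R with hle | hlt
  · exact sub_le_mul_of_antitoneOn hanti hint hF hh (le_max_right r h) hle
  · have hrh : r ≤ h := by
      by_contra! hhr
      rw [max_eq_left hhr.le] at hlt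
      linarith
    rw [max_eq_right hrh] at hlt ⊢
    linarith [mul_le_sub_of_antitoneOn hanti hint hF (hr.trans_le hrR) hlt.le le_rfl]

end AntitoneDensity

lemma pos_of_sum_max_sub_pos {ι : Type*} {s : Finset ι} {r : ι → ℝ} {h : ℝ}
    (hr : ∀ i ∈ s, 0 < r i) (hsum : 0 < ∑ i ∈ s, max (h - r i) 0) : 0 < h := by
  obtain ⟨i, hi, hpos⟩ :=
    Finset.exists_lt_of_sum_lt (f := fun _ => (0:ℝ)) (by simpa using hsum)
  have : 0 < h - r i := by simpa using hpos
  linarith [hr i hi]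

lemma sum_sub_max_nonpos_of_budget {ι : Type*} {s : Finset ι} {r R : ι → ℝ} {h B : ℝ}
    (hh : ∑ i ∈ s, max (h - r i) 0 = B) (hbud : ∑ i ∈ s, (R i - r i) ≤ B) :
    ∑ i ∈ s, (R i - max (r i) h) ≤ 0 := by
  have hsplit : ∑ i ∈ s, (R i - max (r i) h)
      = ∑ i ∈ s, (R i - r i) - ∑ i ∈ s, max (h - r i) 0 := by
    rw [← Finset.sum_sub_distrib]
    refine Finset.sum_congr rfl fun i _ => ?_
    rw [max_comm, ← sub_self (r i), max_sub_sub_right]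
    ring
  linarith

/-- Water-filling is budget-optimal against a strictly decreasing density:
raising the lowest scores to the common level `h` that exhausts the budget
maximizes `∑ F_c(R_i)` over all feasible reinforcements. -/
theorem water_filling_optimal (f F : ℝ → ℝ)
    (hanti : StrictAntiOn f (Set.Ioi 0)) (hpos : ∀ x > (0:ℝ), 0 < f x)
    (hint : IntegrableOn f (Set.Ioi 0))
    (hF : ∀ x, F x = ∫ t in Set.Ioc (0:ℝ) x, f t)
    (n : ℕ) (r : Fin n → ℝ) (hr : ∀ i, 0 < r i)
    (p h : ℝ) (hp : 0 < p)
    (hh : ∑ i, max (h - r i) 0 = n * p)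
    (R : Fin n → ℝ) (hRfeas : ∀ i, r i ≤ R i) (hbud : ∑ i, (R i - r i) ≤ n * p) :
    ∑ i, F (R i) ≤ ∑ i, F (max (r i) h) := by
  rcases Nat.eq_zero_or_pos n with rfl | hn
  · simp
  have hh0 : 0 < h := pos_of_sum_max_sub_pos (fun i _ => hr i)
    (hh ▸ mul_pos (Nat.cast_pos.2 hn) hp)
  have hgain : ∑ i, (F (R i) - F (max (r i) h)) ≤ f h * ∑ i, (R i - max (r i) h) := by
    rw [Finset.mul_sum]
    exact Finset.sum_le_sum fun i _ =>
      sub_max_le_mul_of_antitoneOn hanti.antitoneOn hint hF (hr i) hh0 (hRfeas i)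
  have hslack : f h * ∑ i, (R i - max (r i) h) ≤ 0 :=
    mul_nonpos_of_nonneg_of_nonpos (hpos h hh0).le (sum_sub_max_nonpos_of_budget hh hbud)
  rw [Finset.sum_sub_distrib] at hgain
  linarith
end

section
/- For a concave nondecreasing function F on [0,∞) and any feasible transfer budget, the objective ∑ F(R_i) subject to R_i ≥ r_i, ∑(R_i − r_i) ≤ B is maximized at a point where there is a threshold h such that R_i = max(r_i, h) (up to ties); in particular some optimal solution has this water-filling form. -/
/-- For a concave nondecreasing objective, some optimal feasible reinforcement
has the water-filling form `R_i = max (r_i) h`. -/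
theorem water_filling_form_optimal (F : ℝ → ℝ)
    (hconc : ConcaveOn ℝ (Set.Ici 0) F) (hmono : MonotoneOn F (Set.Ici 0))
    (n : ℕ) (r : Fin n → ℝ) (hr : ∀ i, 0 ≤ r i) (B : ℝ) (hB : 0 ≤ B) :
    ∃ h : ℝ, (∑ i, (max (r i) h - r i) ≤ B) ∧
      ∀ R : Fin n → ℝ, (∀ i, r i ≤ R i) → (∑ i, (R i - r i) ≤ B) →
        ∑ i, F (R i) ≤ ∑ i, F (max (r i) h) := by
  rcases eq_or_lt_of_le hB with hB0 | hBpos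
  · -- B = 0 : take h = 0, every feasible R equals r
    refine ⟨0, ?_, ?_⟩
    · have : ∀ i, max (r i) 0 - r i = 0 := fun i => by
        rw [max_eq_left (hr i)]; ring
      simp [this]; exact hB
    · intro R hR hsum
      have h1 : ∀ j ∈ Finset.univ, 0 ≤ R j - r j := fun j _ => sub_nonneg.2 (hR j)
      have h2 : ∑ j, (R j - r j) = 0 :=
        le_antisymm (hsum.trans hB0.ge) (Finset.sum_nonneg h1)
      have h3 := (Finset.sum_eq_zero_iff_of_nonneg h1).1 h2
      apply le_of_eq
      apply Finset.sum_congr rfl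
      intro i _
      have := h3 i (Finset.mem_univ i)
      have hRi : R i = r i := by linarith
      rw [hRi, max_eq_left (hr i)]
  · by_cases hn : n = 0
    · subst hn
      exact ⟨0, by simp [hB], fun R _ _ => by simp⟩
    · have i0 : Fin n := ⟨0, Nat.pos_of_ne_zero hn⟩
      set g : ℝ → ℝ := fun t => ∑ i, (max (r i) t - r i) with hg
      set M : ℝ := B + ∑ i, r i with hMdef
      have hrsum : ∀ i, r i ≤ ∑ j, r j := fun i =>
        Finset.single_le_sum (fun j _ => hr j) (Finset.mem_univ i)
      have hMr : ∀ i, r i ≤ M := fun i => by have := hrsum i; linarith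
      have hM0 : (0:ℝ) ≤ M := le_trans (hr i0) (hMr i0)
      have hg0 : g 0 = 0 := by
        apply Finset.sum_eq_zero
        intro i _
        rw [max_eq_left (hr i)]; ring
      have hgM : B ≤ g M := by
        have h1 : g M = ∑ i, (M - r i) := by
          apply Finset.sum_congr rfl
          intro i _
          rw [max_eq_right (hMr i)]
        have h2 : M - r i0 ≤ ∑ i, (M - r i) :=
          Finset.single_le_sum (f := fun i => M - r i)
            (fun j _ => sub_nonneg.2 (hMr j)) (Finset.mem_univ i0)
        have := hrsum i0
        rw [h1]; linarith
      have hcont : Continuous g :=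
        continuous_finset_sum _ fun i _ =>
          (continuous_const.max continuous_id).sub continuous_const
      have hBmem : B ∈ Set.Icc (g 0) (g M) := ⟨by rw [hg0]; exact hB, hgM⟩
      obtain ⟨h, hhmem, hgh⟩ := intermediate_value_Icc hM0 hcont.continuousOn hBmem
      have hpos : 0 < h := by
        rcases lt_or_eq_of_le hhmem.1 with h' | h'
        · exact h'
        · exfalso; rw [← h', hg0] at hgh; linarith
      -- supergradient construction
      set S : Set ℝ := (fun a => (F h - F a) / (h - a)) '' Set.Ico 0 h with hSdef
      have hSne : S.Nonempty := ⟨_, ⟨0, ⟨le_refl 0, hpos⟩, rfl⟩⟩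
      set m : ℝ := F (h + 1) - F h with hmdef
      have hlb : ∀ x ∈ S, m ≤ x := by
        rintro x ⟨a, ⟨ha0, hah⟩, rfl⟩
        have := hconc.slope_anti_adjacent (Set.mem_Ici.2 ha0)
          (Set.mem_Ici.2 (by linarith : (0:ℝ) ≤ h + 1)) hah (lt_add_one h)
        have he : h + 1 - h = 1 := by ring
        rw [he, div_one] at this
        exact this
      set c : ℝ := sInf S with hcdef
      have hbdd : BddBelow S := ⟨m, hlb⟩
      have hc0 : 0 ≤ c := by
        have hm0 : 0 ≤ m := sub_nonneg.2 (hmono (Set.mem_Ici.2 hpos.le)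
          (Set.mem_Ici.2 (by linarith)) (by linarith))
        exact le_trans hm0 (le_csInf hSne hlb)
      have hcle : ∀ a, 0 ≤ a → a < h → c ≤ (F h - F a) / (h - a) := by
        intro a ha0 hah
        exact csInf_le hbdd ⟨a, ⟨ha0, hah⟩, rfl⟩
      have hcge : ∀ b, h < b → (F b - F h) / (b - h) ≤ c := by
        intro b hb
        apply le_csInf hSne
        rintro x ⟨a, ⟨ha0, hah⟩, rfl⟩
        exact hconc.slope_anti_adjacent (Set.mem_Ici.2 ha0)
          (Set.mem_Ici.2 (by linarith : (0:ℝ) ≤ b)) hah hb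
      -- key pointwise inequality
      have key : ∀ i : Fin n, ∀ x : ℝ, r i ≤ x →
          F x - F (max (r i) h) ≤ c * (x - max (r i) h) := by
        intro i x hx
        rcases le_or_gt h (r i) with hhr | hrh
        · rw [max_eq_left hhr]
          rcases eq_or_lt_of_le hx with rfl | hlt
          · simp
          · have hsl : (F x - F (r i)) / (x - r i) ≤ c := by
              apply le_csInf hSne
              rintro y ⟨a, ⟨ha0, hah⟩, rfl⟩
              rcases eq_or_lt_of_le hhr with he | hlt2
              · rw [← he] at hlt ⊢
                exact hconc.slope_anti_adjacent (Set.mem_Ici.2 ha0)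
                  (Set.mem_Ici.2 (by linarith : (0:ℝ) ≤ x)) hah hlt
              · have s1 : (F x - F (r i)) / (x - r i) ≤ (F (r i) - F h) / (r i - h) :=
                  hconc.slope_anti_adjacent (Set.mem_Ici.2 hpos.le)
                    (Set.mem_Ici.2 (by linarith : (0:ℝ) ≤ x)) hlt2 hlt
                have s2 : (F (r i) - F h) / (r i - h) ≤ (F h - F a) / (h - a) :=
                  hconc.slope_anti_adjacent (Set.mem_Ici.2 ha0)
                    (Set.mem_Ici.2 (hr i)) hah hlt2
                exact s1.trans s2
            have hxr : 0 < x - r i := by linarith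
            calc F x - F (r i) = (F x - F (r i)) / (x - r i) * (x - r i) := by
                  field_simp
              _ ≤ c * (x - r i) := by
                  apply mul_le_mul_of_nonneg_right hsl hxr.le
        · rw [max_eq_right hrh.le]
          rcases lt_trichotomy x h with hxh | hxh | hxh
          · have hx0 : 0 ≤ x := le_trans (hr i) hx
            have := hcle x hx0 hxh
            have hhx : 0 < h - x := by linarith
            have h1 : c * (h - x) ≤ F h - F x := by
              calc c * (h - x) ≤ (F h - F x) / (h - x) * (h - x) :=
                    mul_le_mul_of_nonneg_right this hhx.le
                _ = F h - F x := by field_simp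
            nlinarith
          · rw [hxh]; simp
          · have := hcge x hxh
            have hhx : 0 < x - h := by linarith
            calc F x - F h = (F x - F h) / (x - h) * (x - h) := by field_simp
              _ ≤ c * (x - h) := mul_le_mul_of_nonneg_right this hhx.le
      refine ⟨h, le_of_eq hgh, ?_⟩
      intro R hR hsum
      have hsplit : ∑ i, (R i - max (r i) h)
          = (∑ i, (R i - r i)) - (∑ i, (max (r i) h - r i)) := by
        rw [← Finset.sum_sub_distrib]
        apply Finset.sum_congr rfl
        intro i _; ring
      have hsum2 : ∑ i, (R i - max (r i) h) ≤ 0 := by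
        rw [hsplit]
        have : g h = ∑ i, (max (r i) h - r i) := rfl
        rw [← this, hgh]
        linarith
      calc ∑ i, F (R i)
          ≤ ∑ i, (F (max (r i) h) + c * (R i - max (r i) h)) := by
            apply Finset.sum_le_sum
            intro i _
            have := key i (R i) (hR i)
            linarith
        _ = (∑ i, F (max (r i) h)) + c * ∑ i, (R i - max (r i) h) := by
            rw [Finset.sum_add_distrib, Finset.mul_sum]
        _ ≤ ∑ i, F (max (r i) h) := by
            have := mul_nonpos_of_nonneg_of_nonpos hc0 hsum2
            linarith
end
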